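/- Let Φ : K → K be the map of the Kac–Paljutkin algebra K = ℂε ⊕ ℂα' ⊕ ℂβ' ⊕ ℂγ' ⊕ M₂(ℂ) to K = ℂε ⊕ ℂα ⊕ ℂβ ⊕ ℂγ ⊕ M₂(ℂ) sending the idempotents (ε, α', β', γ') to (ε, γ, α, β) and x ∈ M₂(ℂ) to vxv* with v = diag(−1, i). Then Φ is a unital *-algebra isomorphism and (Φ ⊗ Φ) ∘ Δ_gr = Δ_KP ∘ Φ, where Δ_gr and Δ_KP are the comultiplications defined below. In particular the graded-twisted coalgebra (K, Δ_gr) is isomorphic as a Hopf *-algebra to the Kac–Paljutkin algebra (K, Δ_KP). -/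

import Mathlib

open TensorProduct Matrix Complex
noncomputable section
set_option synthInstance.maxHeartbeats 1000000
set_option maxHeartbeats 1000000

/-- 2×2 complex matrices. -/
abbrev M2 : Type := Matrix (Fin 2) (Fin 2) ℂ

/-- The underlying algebra of the Kac–Paljutkin algebra: `ℂ × ℂ × ℂ × ℂ × M₂(ℂ)`. -/
abbrev KP : Type := ℂ × ℂ × ℂ × ℂ × M2

/-- The central idempotent ε. -/
def εK : KP := (1,0,0,0,0)
/-- The central idempotent α. -/
def αK : KP := (0,1,0,0,0)
/-- The central idempotent β. -/
def βK : KP := (0,0,1,0,0)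
/-- The central idempotent γ. -/
def γK : KP := (0,0,0,1,0)

/-- Matrix units of `M₂(ℂ)`. -/
def eM (i j : Fin 2) : M2 := Matrix.single i j 1

/-- The matrix units of the `M₂(ℂ)` summand, viewed inside `KP`. -/
def εKij (i j : Fin 2) : KP := (0,0,0,0, eM i j)

def uA : M2 := !![0, I; 1, 0]
def uB : M2 := !![0, 1; I, 0]
def uC : M2 := !![-1, 0; 0, 1]

/-- Embedding of the matrix summand, as a linear map. -/
def mLin : M2 →ₗ[ℂ] KP where
  toFun x := (0,0,0,0,x)
  map_add' x y := by simp [Prod.ext_iff]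
  map_smul' c x := by simp [Prod.ext_iff]

def pε : KP →ₗ[ℂ] ℂ := LinearMap.fst ℂ ℂ _
def pα : KP →ₗ[ℂ] ℂ := (LinearMap.fst ℂ ℂ _) ∘ₗ (LinearMap.snd ℂ ℂ _)
def pβ : KP →ₗ[ℂ] ℂ :=
  (LinearMap.fst ℂ ℂ _) ∘ₗ (LinearMap.snd ℂ ℂ _) ∘ₗ (LinearMap.snd ℂ ℂ _)
def pγ : KP →ₗ[ℂ] ℂ :=
  (LinearMap.fst ℂ ℂ _) ∘ₗ (LinearMap.snd ℂ ℂ _) ∘ₗ (LinearMap.snd ℂ ℂ _) ∘ₗ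
    (LinearMap.snd ℂ ℂ _)
def pM : KP →ₗ[ℂ] M2 :=
  (LinearMap.snd ℂ ℂ _) ∘ₗ (LinearMap.snd ℂ ℂ _) ∘ₗ (LinearMap.snd ℂ ℂ _) ∘ₗ
    (LinearMap.snd ℂ ℂ _)

/-- Conjugation `x ↦ u x u*` by a fixed matrix, as a linear map. -/
def conjBy (u : M2) : M2 →ₗ[ℂ] M2 := (LinearMap.mulLeft ℂ u) ∘ₗ (LinearMap.mulRight ℂ uᴴ)

/-- Entrywise complex conjugate of a matrix. -/
def cconj (u : M2) : M2 := u.map (starRingEnd ℂ)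

/-- Value of the comultiplication on ε. -/
def Dε : KP ⊗[ℂ] KP :=
  εK ⊗ₜ[ℂ] εK + αK ⊗ₜ[ℂ] αK + βK ⊗ₜ[ℂ] βK + γK ⊗ₜ[ℂ] γK +
    (2⁻¹ : ℂ) • (εKij 0 0 ⊗ₜ[ℂ] εKij 0 0 + εKij 0 1 ⊗ₜ[ℂ] εKij 0 1 +
      εKij 1 0 ⊗ₜ[ℂ] εKij 1 0 + εKij 1 1 ⊗ₜ[ℂ] εKij 1 1)

/-- Value of the comultiplication on α. -/
def Dα : KP ⊗[ℂ] KP :=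
  εK ⊗ₜ[ℂ] αK + αK ⊗ₜ[ℂ] εK + βK ⊗ₜ[ℂ] γK + γK ⊗ₜ[ℂ] βK +
    (2⁻¹ : ℂ) • (εKij 0 0 ⊗ₜ[ℂ] εKij 1 1 + I • (εKij 0 1 ⊗ₜ[ℂ] εKij 1 0) -
      I • (εKij 1 0 ⊗ₜ[ℂ] εKij 0 1) + εKij 1 1 ⊗ₜ[ℂ] εKij 0 0)

/-- Value of the comultiplication on β. -/
def Dβ : KP ⊗[ℂ] KP :=
  εK ⊗ₜ[ℂ] βK + βK ⊗ₜ[ℂ] εK + αK ⊗ₜ[ℂ] γK + γK ⊗ₜ[ℂ] αK +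
    (2⁻¹ : ℂ) • (εKij 0 0 ⊗ₜ[ℂ] εKij 1 1 - I • (εKij 0 1 ⊗ₜ[ℂ] εKij 1 0) +
      I • (εKij 1 0 ⊗ₜ[ℂ] εKij 0 1) + εKij 1 1 ⊗ₜ[ℂ] εKij 0 0)

/-- Value of the comultiplication on γ. -/
def Dγ : KP ⊗[ℂ] KP :=
  εK ⊗ₜ[ℂ] γK + γK ⊗ₜ[ℂ] εK + αK ⊗ₜ[ℂ] βK + βK ⊗ₜ[ℂ] αK +
    (2⁻¹ : ℂ) • (εKij 0 0 ⊗ₜ[ℂ] εKij 0 0 - εKij 0 1 ⊗ₜ[ℂ] εKij 0 1 -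
      εKij 1 0 ⊗ₜ[ℂ] εKij 1 0 + εKij 1 1 ⊗ₜ[ℂ] εKij 1 1)

/-- The comultiplication on the matrix summand. -/
def ΔM : M2 →ₗ[ℂ] KP ⊗[ℂ] KP :=
  (TensorProduct.mk ℂ KP KP εK) ∘ₗ mLin
  + (TensorProduct.mk ℂ KP KP αK) ∘ₗ mLin ∘ₗ conjBy uA
  + (TensorProduct.mk ℂ KP KP βK) ∘ₗ mLin ∘ₗ conjBy uB
  + (TensorProduct.mk ℂ KP KP γK) ∘ₗ mLin ∘ₗ conjBy uC
  + ((TensorProduct.mk ℂ KP KP).flip εK) ∘ₗ mLin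
  + ((TensorProduct.mk ℂ KP KP).flip αK) ∘ₗ mLin ∘ₗ conjBy (cconj uA)
  + ((TensorProduct.mk ℂ KP KP).flip βK) ∘ₗ mLin ∘ₗ conjBy (cconj uB)
  + ((TensorProduct.mk ℂ KP KP).flip γK) ∘ₗ mLin ∘ₗ conjBy (cconj uC)

/-- The Kac–Paljutkin comultiplication `Δ_KP : K → K ⊗ K`. -/
def ΔKP : KP →ₗ[ℂ] KP ⊗[ℂ] KP :=
  pε.smulRight Dε + pα.smulRight Dα + pβ.smulRight Dβ + pγ.smulRight Dγ + ΔM ∘ₗ pM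

def wA : M2 := !![-1, 0; 0, 1]
def wB : M2 := !![0, 1; I, 0]
def wC : M2 := !![0, -I; -1, 0]

/-- The graded-twist comultiplication on the matrix summand. -/
def ΔgrM : M2 →ₗ[ℂ] KP ⊗[ℂ] KP :=
  (TensorProduct.mk ℂ KP KP εK) ∘ₗ mLin
  + (TensorProduct.mk ℂ KP KP αK) ∘ₗ mLin ∘ₗ conjBy wA
  + (TensorProduct.mk ℂ KP KP βK) ∘ₗ mLin ∘ₗ conjBy wB
  + (TensorProduct.mk ℂ KP KP γK) ∘ₗ mLin ∘ₗ conjBy wC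
  + ((TensorProduct.mk ℂ KP KP).flip εK) ∘ₗ mLin
  + ((TensorProduct.mk ℂ KP KP).flip αK) ∘ₗ mLin ∘ₗ conjBy (cconj wA)
  + ((TensorProduct.mk ℂ KP KP).flip βK) ∘ₗ mLin ∘ₗ conjBy (cconj wB)
  + ((TensorProduct.mk ℂ KP KP).flip γK) ∘ₗ mLin ∘ₗ conjBy (cconj wC)

/-- Value of the graded-twist comultiplication on ε. -/
def Dgrε : KP ⊗[ℂ] KP :=
  εK ⊗ₜ[ℂ] εK + αK ⊗ₜ[ℂ] αK + βK ⊗ₜ[ℂ] βK + γK ⊗ₜ[ℂ] γK +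
    (2⁻¹ : ℂ) • (εKij 0 0 ⊗ₜ[ℂ] εKij 0 0 - εKij 0 1 ⊗ₜ[ℂ] εKij 0 1 -
      εKij 1 0 ⊗ₜ[ℂ] εKij 1 0 + εKij 1 1 ⊗ₜ[ℂ] εKij 1 1)

/-- Value of the graded-twist comultiplication on α'. -/
def Dgrα : KP ⊗[ℂ] KP :=
  εK ⊗ₜ[ℂ] αK + αK ⊗ₜ[ℂ] εK + βK ⊗ₜ[ℂ] γK + γK ⊗ₜ[ℂ] βK +
    (2⁻¹ : ℂ) • (εKij 0 0 ⊗ₜ[ℂ] εKij 0 0 + εKij 0 1 ⊗ₜ[ℂ] εKij 0 1 +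
      εKij 1 0 ⊗ₜ[ℂ] εKij 1 0 + εKij 1 1 ⊗ₜ[ℂ] εKij 1 1)

/-- Value of the graded-twist comultiplication on β'. -/
def Dgrβ : KP ⊗[ℂ] KP :=
  εK ⊗ₜ[ℂ] βK + βK ⊗ₜ[ℂ] εK + αK ⊗ₜ[ℂ] γK + γK ⊗ₜ[ℂ] αK +
    (2⁻¹ : ℂ) • (εKij 0 0 ⊗ₜ[ℂ] εKij 1 1 + I • (εKij 0 1 ⊗ₜ[ℂ] εKij 1 0) -
      I • (εKij 1 0 ⊗ₜ[ℂ] εKij 0 1) + εKij 1 1 ⊗ₜ[ℂ] εKij 0 0)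

/-- Value of the graded-twist comultiplication on γ'. -/
def Dgrγ : KP ⊗[ℂ] KP :=
  εK ⊗ₜ[ℂ] γK + γK ⊗ₜ[ℂ] εK + αK ⊗ₜ[ℂ] βK + βK ⊗ₜ[ℂ] αK +
    (2⁻¹ : ℂ) • (εKij 0 0 ⊗ₜ[ℂ] εKij 1 1 - I • (εKij 0 1 ⊗ₜ[ℂ] εKij 1 0) +
      I • (εKij 1 0 ⊗ₜ[ℂ] εKij 0 1) + εKij 1 1 ⊗ₜ[ℂ] εKij 0 0)

/-- The graded-twist comultiplication `Δ_gr : K → K ⊗ K`. -/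
def Δgr : KP →ₗ[ℂ] KP ⊗[ℂ] KP :=
  pε.smulRight Dgrε + pα.smulRight Dgrα + pβ.smulRight Dgrβ + pγ.smulRight Dgrγ + ΔgrM ∘ₗ pM

def vM : M2 := !![-1, 0; 0, I]

/-- The map `Φ : K → K` sending `(ε, α', β', γ')` to `(ε, γ, α, β)` and `x ∈ M₂(ℂ)` to
`v x v*` with `v = diag(−1, i)`. -/
def ΦK : KP →ₗ[ℂ] KP :=
  pε.prod (pβ.prod (pγ.prod (pα.prod ((conjBy vM) ∘ₗ pM))))

/-!
`Φ` permutes the four one-dimensional summands and conjugates the matrix summand by the unitary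
`v`, so it is a unital `*`-automorphism of `K`. On the matrix summand both comultiplications are
sums of terms `g ⊗ Ad(w_g) x` and `Ad(w̄_g) x ⊗ g`, and the intertwining reduces to the matrix
identities `v w_g = ± u_{Φ g} v` and `v w̄_g = ± ū_{Φ g} v`, because `Ad(-u) = Ad(u)`. On the
central idempotents it is a direct check: `Φ` multiplies the off-diagonal matrix units by `±i`,
which turns the coefficients of `Δ_gr` into those of `Δ_KP`.
-/

lemma conjBy_apply (u x : M2) : conjBy u x = u * x * uᴴ :=
  (Matrix.mul_assoc u x uᴴ).symm

lemma conjBy_conjBy (u w x : M2) : conjBy u (conjBy w x) = conjBy (u * w) x := by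
  simp only [conjBy_apply, Matrix.conjTranspose_mul, Matrix.mul_assoc]

lemma conjBy_neg (u : M2) : conjBy (-u) = conjBy u := by
  ext1 x
  simp only [conjBy_apply, Matrix.conjTranspose_neg, Matrix.neg_mul, Matrix.mul_neg, neg_neg]

lemma conjBy_eq_conjStarAlgAut (u : unitary M2) (x : M2) :
    conjBy u x = Unitary.conjStarAlgAut ℂ M2 u x :=
  conjBy_apply u x

lemma vM_mem_unitary : vM ∈ unitary M2 := by
  refine Matrix.mem_unitaryGroup_iff.2 ?_
  ext i j; fin_cases i <;> fin_cases j <;> simp [vM, Matrix.mul_apply, Fin.sum_univ_two]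

lemma coe_conjBy_vM : ⇑(conjBy vM) = Unitary.conjStarAlgAut ℂ M2 ⟨vM, vM_mem_unitary⟩ :=
  funext (conjBy_eq_conjStarAlgAut ⟨vM, vM_mem_unitary⟩)

lemma ΦK_apply (z : KP) :
    ΦK z = (z.1, z.2.2.1, z.2.2.2.1, z.2.1, conjBy vM z.2.2.2.2) :=
  rfl

lemma ΦK_bijective : Function.Bijective ΦK := by
  set σ := Unitary.conjStarAlgAut ℂ M2 ⟨vM, vM_mem_unitary⟩
  refine Function.bijective_iff_has_inverse.2
    ⟨fun z => (z.1, z.2.2.2.1, z.2.1, z.2.2.1, σ.symm z.2.2.2.2), fun z => ?_, fun z => ?_⟩ <;>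
    simp only [ΦK_apply, coe_conjBy_vM, StarAlgEquiv.apply_symm_apply,
      StarAlgEquiv.symm_apply_apply, σ]

lemma ΦK_one : ΦK 1 = 1 := by
  simp only [ΦK_apply, coe_conjBy_vM, Prod.fst_one, Prod.snd_one, map_one]
  rfl

lemma ΦK_mul (x y : KP) : ΦK (x * y) = ΦK x * ΦK y := by
  simp only [ΦK_apply, coe_conjBy_vM, Prod.fst_mul, Prod.snd_mul, map_mul, Prod.mk_mul_mk]

lemma ΦK_star (x : KP) : ΦK (star x) = star (ΦK x) := by
  simp only [ΦK_apply, coe_conjBy_vM, map_star, Prod.star_def]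

lemma ΦK_mLin (x : M2) : ΦK (mLin x) = mLin (conjBy vM x) :=
  rfl

lemma ΦK_εK : ΦK εK = εK := by simp [ΦK_apply, εK]
lemma ΦK_αK : ΦK αK = γK := by simp [ΦK_apply, αK, γK]
lemma ΦK_βK : ΦK βK = αK := by simp [ΦK_apply, βK, αK]
lemma ΦK_γK : ΦK γK = βK := by simp [ΦK_apply, γK, βK]

lemma mLin_eM (i j : Fin 2) : mLin (eM i j) = εKij i j :=
  rfl

lemma conjBy_vM_eM (i j : Fin 2) : conjBy vM (eM i j) = (vM i i * star (vM j j)) • eM i j := by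
  ext k l
  fin_cases i <;> fin_cases j <;> fin_cases k <;> fin_cases l <;>
    simp [conjBy_apply, vM, eM, Matrix.mul_apply, Fin.sum_univ_two, Matrix.vecMul, dotProduct,
      Matrix.single_apply]

lemma ΦK_εKij (i j : Fin 2) : ΦK (εKij i j) = (vM i i * star (vM j j)) • εKij i j := by
  rw [← mLin_eM, ΦK_mLin, conjBy_vM_eM, map_smul]

lemma ΦK_εKij_self (i : Fin 2) : ΦK (εKij i i) = εKij i i := by
  rw [ΦK_εKij]
  fin_cases i <;> simp [vM]

lemma ΦK_εKij_01 : ΦK (εKij 0 1) = I • εKij 0 1 := by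
  rw [ΦK_εKij]
  simp [vM]

lemma ΦK_εKij_10 : ΦK (εKij 1 0) = -I • εKij 1 0 := by
  rw [ΦK_εKij]
  simp [vM]

lemma map_ΦK_Dgr :
    TensorProduct.map ΦK ΦK Dgrε = Dε ∧ TensorProduct.map ΦK ΦK Dgrα = Dγ ∧
      TensorProduct.map ΦK ΦK Dgrβ = Dα ∧ TensorProduct.map ΦK ΦK Dgrγ = Dβ := by
  refine ⟨?_, ?_, ?_, ?_⟩ <;>
    simp only [Dgrε, Dgrα, Dgrβ, Dgrγ, Dε, Dα, Dβ, Dγ, map_add, map_sub, map_smul,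
      TensorProduct.map_tmul, ΦK_εK, ΦK_αK, ΦK_βK, ΦK_γK, ΦK_εKij_self, ΦK_εKij_01, ΦK_εKij_10,
      ← TensorProduct.smul_tmul', TensorProduct.tmul_smul, smul_smul, I_mul_I, neg_mul, mul_neg,
      neg_neg] <;>
    module

lemma vM_mul_wA : vM * wA = uC * vM := by
  ext i j; fin_cases i <;> fin_cases j <;> simp [vM, wA, uC]

lemma vM_mul_wB : vM * wB = uA * vM := by
  ext i j; fin_cases i <;> fin_cases j <;> simp [vM, wB, uA]

lemma vM_mul_wC : vM * wC = uB * vM := by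
  ext i j; fin_cases i <;> fin_cases j <;> simp [vM, wC, uB]

lemma vM_mul_cconj_wA : vM * cconj wA = cconj uC * vM := by
  ext i j; fin_cases i <;> fin_cases j <;> simp [vM, wA, uC, cconj, Matrix.mul_apply]

lemma vM_mul_cconj_wB : vM * cconj wB = -(cconj uA * vM) := by
  ext i j; fin_cases i <;> fin_cases j <;> simp [vM, wB, uA, cconj, Matrix.mul_apply]

lemma vM_mul_cconj_wC : vM * cconj wC = -(cconj uB * vM) := by
  ext i j; fin_cases i <;> fin_cases j <;> simp [vM, wC, uB, cconj, Matrix.mul_apply]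

lemma map_ΦK_comp_ΔgrM : TensorProduct.map ΦK ΦK ∘ₗ ΔgrM = ΔM ∘ₗ conjBy vM := by
  ext1 x
  simp only [ΔgrM, ΔM, LinearMap.add_apply, LinearMap.comp_apply, TensorProduct.mk_apply,
    LinearMap.flip_apply, map_add, TensorProduct.map_tmul, ΦK_εK, ΦK_αK, ΦK_βK, ΦK_γK, ΦK_mLin,
    conjBy_conjBy, vM_mul_wA, vM_mul_wB, vM_mul_wC, vM_mul_cconj_wA, vM_mul_cconj_wB,
    vM_mul_cconj_wC, conjBy_neg]
  abel

lemma map_ΦK_comp_Δgr : TensorProduct.map ΦK ΦK ∘ₗ Δgr = ΔKP ∘ₗ ΦK := by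
  refine LinearMap.ext fun z => ?_
  obtain ⟨hDε, hDα, hDβ, hDγ⟩ := map_ΦK_Dgr
  obtain ⟨hε, hα, hβ, hγ⟩ :
      pε (ΦK z) = pε z ∧ pα (ΦK z) = pβ z ∧ pβ (ΦK z) = pγ z ∧ pγ (ΦK z) = pα z :=
    ⟨rfl, rfl, rfl, rfl⟩
  have hM : TensorProduct.map ΦK ΦK (ΔgrM (pM z)) = ΔM (pM (ΦK z)) :=
    LinearMap.congr_fun map_ΦK_comp_ΔgrM (pM z)
  simp only [LinearMap.comp_apply, Δgr, ΔKP, LinearMap.add_apply, LinearMap.smulRight_apply,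
    map_add, map_smul, hDε, hDα, hDβ, hDγ, hM, hε, hα, hβ, hγ]
  abel

/-- `Φ` is a unital `*`-algebra isomorphism of `K` intertwining the
graded-twist comultiplication `Δ_gr` with the Kac–Paljutkin comultiplication `Δ_KP`;
i.e. `(Φ ⊗ Φ) ∘ Δ_gr = Δ_KP ∘ Φ`.  In particular `(K, Δ_gr) ≅ (K, Δ_KP)` as Hopf
`*`-algebras. -/
theorem graded_twist_iso_KacPaljutkin :
    -- Φ sends (ε, α', β', γ') to (ε, γ, α, β) and x to v x v*
    ΦK εK = εK ∧ ΦK αK = γK ∧ ΦK βK = αK ∧ ΦK γK = βK ∧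
    (∀ x : M2, ΦK (mLin x) = mLin (vM * x * vMᴴ)) ∧
    -- Φ is a unital *-algebra isomorphism
    Function.Bijective ΦK ∧
    ΦK 1 = 1 ∧
    (∀ x y : KP, ΦK (x * y) = ΦK x * ΦK y) ∧
    (∀ x : KP, ΦK (star x) = star (ΦK x)) ∧
    -- (Φ ⊗ Φ) ∘ Δ_gr = Δ_KP ∘ Φ
    TensorProduct.map ΦK ΦK ∘ₗ Δgr = ΔKP ∘ₗ ΦK :=
  ⟨ΦK_εK, ΦK_αK, ΦK_βK, ΦK_γK, fun x => (ΦK_mLin x).trans (congrArg mLin (conjBy_apply vM x)),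
    ΦK_bijective, ΦK_one, ΦK_mul, ΦK_star, map_ΦK_comp_Δgr⟩
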